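/- Under assumptions (i)–(iv), for every λ ∈ ℝ: lim_{n→∞} ∫₀^∞ e^{iλt} R_n(nt) dt = 1/(b − iσλ), which equals the Fourier transform ∫₀^∞ e^{iλt} σ^{−1} e^{−(b/σ)t} dt of the exponential function t ↦ σ^{−1} e^{−(b/σ)t}. -/

import Mathlib

open MeasureTheory Set Filter

/-- Convolution on `[0,∞)`: `(f∗g)(t) = ∫₀^t f(t−s) g(s) ds`. -/
noncomputable def conv (f g : ℝ → ℝ) (t : ℝ) : ℝ :=
  ∫ s in (0:ℝ)..t, f (t - s) * g s

/-- `L¹` norm on `[0,∞)`: `‖f‖_{L¹} = ∫₀^∞ |f(t)| dt`. -/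
noncomputable def L1norm (f : ℝ → ℝ) : ℝ :=
  ∫ t in Set.Ioi (0:ℝ), |f t|

section Aux

open Complex

lemma aux_norm_e (l t : ℝ) : ‖Complex.exp (Complex.I * l * t)‖ = 1 := by
  rw [Complex.norm_exp]
  norm_num [Complex.mul_re, Complex.mul_im]

lemma aux_cont_e (l : ℝ) : Continuous (fun t : ℝ => Complex.exp (Complex.I * l * t)) := by
  continuity

lemma integrableOn_e_mul (l : ℝ) {f : ℝ → ℝ} (hm : Measurable f)
    (hi : IntegrableOn f (Set.Ioi 0)) :
    IntegrableOn (fun t : ℝ => Complex.exp (Complex.I * l * t) * (f t : ℂ)) (Set.Ioi (0:ℝ)) := by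
  refine Integrable.mono' hi.norm ?_ ?_
  · exact ((aux_cont_e l).aestronglyMeasurable).mul
      (Complex.measurable_ofReal.comp hm).aestronglyMeasurable
  · exact Filter.Eventually.of_forall fun t => le_of_eq (by
      rw [norm_mul, aux_norm_e, one_mul, Complex.norm_real])

lemma norm_hat_le (l : ℝ) (f : ℝ → ℝ) :
    ‖∫ t in Set.Ioi (0:ℝ), Complex.exp (Complex.I * l * t) * (f t : ℂ)‖ ≤ L1norm f := by
  refine le_trans (norm_integral_le_integral_norm _) (le_of_eq ?_)
  refine integral_congr_ae (Filter.Eventually.of_forall fun t => ?_)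
  show ‖Complex.exp (Complex.I * l * t) * (f t : ℂ)‖ = |f t|
  rw [norm_mul, aux_norm_e, one_mul, Complex.norm_real, Real.norm_eq_abs]

lemma integrableOn_cexp {z : ℂ} (hz : z.re < 0) :
    IntegrableOn (fun t : ℝ => Complex.exp (z * t)) (Set.Ioi 0) := by
  refine Integrable.mono' (g := fun t => Real.exp (-(-z.re) * t))
    (exp_neg_integrableOn_Ioi 0 (by linarith)) ?_ ?_
  · exact (Complex.continuous_exp.comp (by continuity)).aestronglyMeasurable
  · refine Filter.Eventually.of_forall fun t => le_of_eq ?_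
    rw [Complex.norm_exp]
    congr 1
    simp [Complex.mul_re]

lemma integral_cexp_Ioi {z : ℂ} (hz : z.re < 0) :
    ∫ t in Set.Ioi (0:ℝ), Complex.exp (z * t) = -z⁻¹ := by
  have hz0 : z ≠ 0 := fun h => by simp [h] at hz
  have hderiv : ∀ x ∈ Set.Ioi (0:ℝ), HasDerivAt (fun t : ℝ => z⁻¹ * Complex.exp (z * t))
      (Complex.exp (z * x)) x := by
    intro x _
    have h1 : HasDerivAt (fun t : ℝ => z * (t : ℂ)) z x := by
      simpa using (Complex.ofRealCLM.hasDerivAt (x := x)).const_mul z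
    have h3 := h1.cexp.const_mul z⁻¹
    convert h3 using 1
    exacts [rfl, by rw [mul_comm (Complex.exp (z * x)) z, inv_mul_cancel_left₀ hz0]]
  have htend : Tendsto (fun t : ℝ => z⁻¹ * Complex.exp (z * t)) atTop (nhds 0) := by
    rw [tendsto_zero_iff_norm_tendsto_zero]
    have h4 : Tendsto (fun t : ℝ => Real.exp (-((-z.re) * t))) atTop (nhds 0) :=
      Real.tendsto_exp_neg_atTop_nhds_zero.comp
        (Tendsto.const_mul_atTop (by linarith) tendsto_id)
    have h5 := h4.const_mul ‖z⁻¹‖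
    rw [mul_zero] at h5
    refine h5.congr fun t => ?_
    rw [norm_mul]
    congr 1
    rw [Complex.norm_exp]
    congr 1
    simp [Complex.mul_re]
  have key := integral_Ioi_of_hasDerivAt_of_tendsto
    (f := fun t : ℝ => z⁻¹ * Complex.exp (z * t)) (a := 0)
    (Continuous.continuousWithinAt (by continuity)) hderiv (integrableOn_cexp hz) htend
  rw [key]
  simp

end Aux

section Conv

open Complex

/-- The shear `(u, s) ↦ (u + s, s)` as a homeomorphism of `ℝ × ℝ`. -/
def shearHomeo : (ℝ × ℝ) ≃ₜ (ℝ × ℝ) where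
  toFun p := (p.1 + p.2, p.2)
  invFun p := (p.1 - p.2, p.2)
  left_inv p := by simp
  right_inv p := by simp
  continuous_toFun := by continuity
  continuous_invFun := by continuity

lemma hat_conv (l : ℝ) {f g : ℝ → ℝ} (hfm : Measurable f) (hgm : Measurable g)
    (hfi : IntegrableOn f (Set.Ioi 0)) (hgi : IntegrableOn g (Set.Ioi 0)) :
    IntegrableOn (fun t : ℝ => Complex.exp (Complex.I * l * t) * ((conv f g t : ℝ) : ℂ))
      (Set.Ioi (0:ℝ)) ∧
    ∫ t in Set.Ioi (0:ℝ), Complex.exp (Complex.I * l * t) * ((conv f g t : ℝ) : ℂ)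
      = (∫ t in Set.Ioi (0:ℝ), Complex.exp (Complex.I * l * t) * (f t : ℂ))
        * (∫ t in Set.Ioi (0:ℝ), Complex.exp (Complex.I * l * t) * (g t : ℂ)) := by
  set E : ℝ → ℂ := fun t => Complex.exp (Complex.I * l * t) with hE
  set F : ℝ × ℝ → ℂ := fun p =>
    if 0 < p.2 ∧ p.2 < p.1 then E p.1 * ((f (p.1 - p.2) * g p.2 : ℝ) : ℂ) else 0 with hF
  set G1 : ℝ → ℂ := (Set.Ioi (0:ℝ)).indicator (fun u => E u * (f u : ℂ)) with hG1
  set G2 : ℝ → ℂ := (Set.Ioi (0:ℝ)).indicator (fun u => E u * (g u : ℂ)) with hG2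
  have hG1i : Integrable G1 volume :=
    (integrableOn_e_mul l hfm hfi).integrable_indicator measurableSet_Ioi
  have hG2i : Integrable G2 volume :=
    (integrableOn_e_mul l hgm hgi).integrable_indicator measurableSet_Ioi
  have hGi : Integrable (fun p : ℝ × ℝ => G1 p.1 * G2 p.2) (volume.prod volume) :=
    hG1i.mul_prod hG2i
  have hEadd : ∀ u s : ℝ, E (u + s) = E u * E s := by
    intro u s
    simp only [hE, ← Complex.exp_add]
    congr 1
    push_cast
    ring
  have hcomp : ∀ p : ℝ × ℝ, F (p.1 + p.2, p.2) = G1 p.1 * G2 p.2 := by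
    intro p
    by_cases h2 : 0 < p.2
    · by_cases h1 : 0 < p.1
      · have hmem1 : p.1 ∈ Set.Ioi (0:ℝ) := h1
        have hmem2 : p.2 ∈ Set.Ioi (0:ℝ) := h2
        rw [hG1, hG2, Set.indicator_of_mem hmem1, Set.indicator_of_mem hmem2]
        show (if 0 < p.2 ∧ p.2 < p.1 + p.2 then
          E (p.1 + p.2) * ((f (p.1 + p.2 - p.2) * g p.2 : ℝ) : ℂ) else 0) = _
        rw [if_pos ⟨h2, by linarith⟩]
        have h3 : p.1 + p.2 - p.2 = p.1 := by ring
        rw [h3, hEadd]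
        push_cast
        ring
      · have hmem1 : p.1 ∉ Set.Ioi (0:ℝ) := h1
        rw [hG1, Set.indicator_of_notMem hmem1, zero_mul]
        show (if 0 < p.2 ∧ p.2 < p.1 + p.2 then
          E (p.1 + p.2) * ((f (p.1 + p.2 - p.2) * g p.2 : ℝ) : ℂ) else 0) = 0
        exact if_neg (fun h => h1 (by linarith [h.2]))
    · have hmem2 : p.2 ∉ Set.Ioi (0:ℝ) := h2
      rw [hG2, Set.indicator_of_notMem hmem2, mul_zero]
      show (if 0 < p.2 ∧ p.2 < p.1 + p.2 then
        E (p.1 + p.2) * ((f (p.1 + p.2 - p.2) * g p.2 : ℝ) : ℂ) else 0) = 0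
      exact if_neg (fun h => h2 h.1)
  have hT : MeasurePreserving (fun p : ℝ × ℝ => (p.1 + p.2, p.2))
      (volume.prod volume) (volume.prod volume) :=
    measurePreserving_add_prod volume volume
  have hFmeas : Measurable F := by
    refine Measurable.ite ?_ ?_ measurable_const
    · exact (measurableSet_lt measurable_const measurable_snd).inter
        (measurableSet_lt measurable_snd measurable_fst)
    · exact (((aux_cont_e l).measurable).comp measurable_fst).mul
        (Complex.measurable_ofReal.comp
          ((hfm.comp (measurable_fst.sub measurable_snd)).mul (hgm.comp measurable_snd)))
  have hcompeq : (F ∘ fun p : ℝ × ℝ => (p.1 + p.2, p.2)) = fun p : ℝ × ℝ => G1 p.1 * G2 p.2 :=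
    funext fun p => hcomp p
  have hFint : Integrable F (volume.prod volume) := by
    refine (hT.integrable_comp hFmeas.aestronglyMeasurable).mp ?_
    rw [hcompeq]
    exact hGi
  have hprodval : ∫ p, F p ∂(volume.prod volume)
      = (∫ t in Set.Ioi (0:ℝ), E t * (f t : ℂ)) * ∫ t in Set.Ioi (0:ℝ), E t * (g t : ℂ) := by
    rw [← hT.integral_comp shearHomeo.measurableEmbedding F]
    simp only [shearHomeo, Homeomorph.homeomorph_mk_coe, Equiv.coe_fn_mk, hcomp]
    rw [integral_prod_mul, hG1, hG2,
      integral_indicator measurableSet_Ioi, integral_indicator measurableSet_Ioi]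
  have hinner : ∀ t : ℝ, (∫ s, F (t, s))
      = (Set.Ioi (0:ℝ)).indicator (fun t => E t * ((conv f g t : ℝ) : ℂ)) t := by
    intro t
    by_cases ht : 0 < t
    · rw [Set.indicator_of_mem (Set.mem_Ioi.mpr ht)]
      have h5 : (fun s => F (t, s))
          = (Set.Ioo (0:ℝ) t).indicator (fun s => E t * ((f (t - s) * g s : ℝ) : ℂ)) := by
        funext s
        by_cases hs : 0 < s ∧ s < t
        · show (if 0 < s ∧ s < t then E t * ((f (t - s) * g s : ℝ) : ℂ) else 0) = _
          rw [if_pos hs, Set.indicator_of_mem (Set.mem_Ioo.mpr hs)]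
        · show (if 0 < s ∧ s < t then E t * ((f (t - s) * g s : ℝ) : ℂ) else 0) = _
          rw [if_neg hs, Set.indicator_of_notMem (by simpa [Set.mem_Ioo] using hs)]
      rw [h5, integral_indicator measurableSet_Ioo, integral_const_mul]
      congr 1
      rw [show conv f g t = ∫ s in Set.Ioo (0:ℝ) t, f (t - s) * g s from by
        rw [conv, intervalIntegral.integral_of_le ht.le, integral_Ioc_eq_integral_Ioo]]
      exact integral_ofReal (𝕜 := ℂ)
    · rw [Set.indicator_of_notMem (fun h => ht (Set.mem_Ioi.mp h))]
      have h6 : (fun s => F (t, s)) = fun _ => (0:ℂ) :=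
        funext fun s => if_neg (fun h => ht (lt_trans h.1 h.2))
      rw [h6, integral_zero]
  have hiter : ∫ p, F p ∂(volume.prod volume) = ∫ t, ∫ s, F (t, s) :=
    integral_prod F hFint
  have hintleft : Integrable (fun t => ∫ s, F (t, s)) volume := hFint.integral_prod_left
  have heq2 : (fun t => ∫ s, F (t, s))
      = (Set.Ioi (0:ℝ)).indicator (fun t => E t * ((conv f g t : ℝ) : ℂ)) :=
    funext hinner
  rw [heq2] at hintleft
  constructor
  · exact (integrable_indicator_iff measurableSet_Ioi).mp hintleft
  · have : ∫ t in Set.Ioi (0:ℝ), E t * ((conv f g t : ℝ) : ℂ)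
        = ∫ p, F p ∂(volume.prod volume) := by
      rw [hiter, ← integral_indicator measurableSet_Ioi, ← heq2]
    rw [this, hprodval]

end Conv

section Bounds

open Complex

lemma norm_one_sub_exp_le (x : ℝ) : ‖1 - Complex.exp (Complex.I * x)‖ ≤ 2 * |x| := by
  rcases le_or_gt |x| 1 with h | h
  · have h1 := Complex.norm_exp_sub_one_le (x := Complex.I * x)
      (by simp [h])
    rw [norm_sub_rev]
    simpa using h1
  · have h1 : ‖1 - Complex.exp (Complex.I * x)‖ ≤ 2 := by
      refine le_trans (norm_sub_le _ _) ?_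
      have : ‖Complex.exp (Complex.I * x)‖ = 1 := by
        have := aux_norm_e 1 x
        simpa using this
      simp [this]
      norm_num
    linarith
lemma norm_one_sub_exp_add_le {x : ℝ} (h : |x| ≤ 1) :
    ‖1 - Complex.exp (Complex.I * x) + Complex.I * x‖ ≤ x ^ 2 := by
  have h1 := Complex.norm_exp_sub_one_sub_id_le (x := Complex.I * x)
    (by simp [h])
  rw [show (1 : ℂ) - Complex.exp (Complex.I * x) + Complex.I * x
      = -(Complex.exp (Complex.I * x) - 1 - Complex.I * x) from by ring, norm_neg]
  calc ‖Complex.exp (Complex.I * x) - 1 - Complex.I * x‖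
      ≤ ‖Complex.I * x‖ ^ 2 := h1
    _ = x ^ 2 := by simp [sq_abs]

lemma key_norm_bound (n : ℕ) (l t : ℝ) (ht : 0 ≤ t) :
    ‖(n : ℂ) * (1 - Complex.exp (Complex.I * ((l / (n:ℝ) : ℝ) : ℂ) * t))‖ ≤ 2 * |l| * t := by
  rcases Nat.eq_zero_or_pos n with rfl | hn
  · simp
    positivity
  · have hn0 : (0:ℝ) < n := by exact_mod_cast hn
    rw [norm_mul]
    have h1 : ‖(n:ℂ)‖ = (n:ℝ) := by
      simp [Complex.norm_natCast]
    have h2 : (Complex.I * ((l / (n:ℝ) : ℝ) : ℂ) * t : ℂ) = Complex.I * ((l / (n:ℝ)) * t : ℝ) := by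
      push_cast
      ring
    rw [h1, h2]
    calc (n:ℝ) * ‖1 - Complex.exp (Complex.I * ((l / (n:ℝ)) * t : ℝ))‖
        ≤ (n:ℝ) * (2 * |(l / (n:ℝ)) * t|) := by
          exact mul_le_mul_of_nonneg_left (norm_one_sub_exp_le _) hn0.le
      _ = 2 * |l| * t := by
          rw [abs_mul, abs_div, _root_.abs_of_nonneg ht, _root_.abs_of_nonneg hn0.le]
          field_simp

lemma norm_Ilt (l t : ℝ) (ht : 0 ≤ t) : ‖(Complex.I * l * t : ℂ)‖ = |l| * t := by
  simp [map_mul, _root_.abs_of_nonneg ht]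

end Bounds

section Alim

open Complex

lemma err_tendsto_zero (φ : ℕ → ℝ → ℝ) (φbar : ℝ → ℝ) (l : ℝ)
    (hφmeas : ∀ n, Measurable (φ n))
    (hφpos : ∀ n t, 0 ≤ t → 0 ≤ φ n t)
    (hφbar_meas : Measurable φbar)
    (hφbar_nonneg : ∀ t : ℝ, 0 ≤ t → 0 ≤ φbar t)
    (hdom : ∀ n t, 0 ≤ t → φ n t ≤ φbar t)
    (htφbar_int : IntegrableOn (fun t => t * φbar t) (Set.Ioi (0:ℝ)))
    (hφint : ∀ n, IntegrableOn (φ n) (Set.Ioi (0:ℝ))) :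
    Tendsto (fun n : ℕ => ∫ t in Set.Ioi (0:ℝ),
        ((n:ℂ) * (1 - Complex.exp (Complex.I * ((l / (n:ℝ) : ℝ) : ℂ) * t)) + Complex.I * l * t)
          * (φ n t : ℂ)) atTop (nhds 0) := by
  set X : ℕ → ℝ → ℂ := fun n t =>
    (n:ℂ) * (1 - Complex.exp (Complex.I * ((l / (n:ℝ) : ℝ) : ℂ) * t)) + Complex.I * l * t with hX
  have hXcont : ∀ n, Continuous (X n) := by
    intro n
    apply Continuous.add
    · exact continuous_const.mul (continuous_const.sub (aux_cont_e (l / (n:ℝ))))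
    · continuity
  have hXbound : ∀ n, ∀ t : ℝ, 0 ≤ t → ‖X n t‖ ≤ 3 * |l| * t := by
    intro n t ht
    calc ‖X n t‖ ≤ ‖(n:ℂ) * (1 - Complex.exp (Complex.I * ((l / (n:ℝ) : ℝ) : ℂ) * t))‖
        + ‖(Complex.I * l * t : ℂ)‖ := norm_add_le _ _
      _ ≤ 2 * |l| * t + |l| * t := by
          gcongr
          · exact key_norm_bound n l t ht
          · exact le_of_eq (norm_Ilt l t ht)
      _ = 3 * |l| * t := by ring
  -- integrability of the integrand
  have hXint : ∀ n, IntegrableOn (fun t => X n t * (φ n t : ℂ)) (Set.Ioi (0:ℝ)) := by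
    intro n
    refine Integrable.mono' (htφbar_int.const_mul (3 * |l|)) ?_ ?_
    · exact ((hXcont n).aestronglyMeasurable.mul
        (Complex.measurable_ofReal.comp (hφmeas n)).aestronglyMeasurable)
    · rw [ae_restrict_iff' measurableSet_Ioi]
      refine Filter.Eventually.of_forall fun t ht => ?_
      have ht' : (0:ℝ) ≤ t := (Set.mem_Ioi.mp ht).le
      rw [norm_mul, Complex.norm_real, Real.norm_eq_abs,
        _root_.abs_of_nonneg (hφpos n t ht')]
      calc ‖X n t‖ * φ n t ≤ (3 * |l| * t) * φbar t := by
            apply mul_le_mul (hXbound n t ht') (hdom n t ht') (hφpos n t ht')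
            positivity
        _ = 3 * |l| * (t * φbar t) := by ring
  -- dominating sequence
  set D : ℕ → ℝ := fun n => ∫ t in Set.Ioi (0:ℝ), ‖X n t‖ * φbar t with hD
  have hFint : ∀ n, IntegrableOn (fun t => ‖X n t‖ * φbar t) (Set.Ioi (0:ℝ)) := by
    intro n
    refine Integrable.mono' (htφbar_int.const_mul (3 * |l|)) ?_ ?_
    · exact ((hXcont n).norm.measurable.mul hφbar_meas).aestronglyMeasurable
    · rw [ae_restrict_iff' measurableSet_Ioi]
      refine Filter.Eventually.of_forall fun t ht => ?_
      have ht' : (0:ℝ) ≤ t := (Set.mem_Ioi.mp ht).le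
      have h0 : 0 ≤ φbar t := hφbar_nonneg t ht'
      rw [Real.norm_eq_abs, _root_.abs_of_nonneg (mul_nonneg (norm_nonneg _) h0)]
      calc ‖X n t‖ * φbar t ≤ (3 * |l| * t) * φbar t :=
            mul_le_mul_of_nonneg_right (hXbound n t ht') h0
        _ = 3 * |l| * (t * φbar t) := by ring
  have hD0 : Tendsto D atTop (nhds 0) := by
    have key := MeasureTheory.tendsto_integral_of_dominated_convergence
      (μ := volume.restrict (Set.Ioi (0:ℝ)))
      (F := fun n t => ‖X n t‖ * φbar t) (f := fun _ => (0:ℝ))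
      (bound := fun t => 3 * |l| * (t * φbar t))
      (fun n => ((hXcont n).norm.measurable.mul hφbar_meas).aestronglyMeasurable)
      (htφbar_int.const_mul (3 * |l|))
      ?_ ?_
    · simpa using key
    · -- h_bound
      intro n
      rw [ae_restrict_iff' measurableSet_Ioi]
      refine Filter.Eventually.of_forall fun t ht => ?_
      have ht' : (0:ℝ) ≤ t := (Set.mem_Ioi.mp ht).le
      have h0 : 0 ≤ φbar t := hφbar_nonneg t ht'
      rw [Real.norm_eq_abs, _root_.abs_of_nonneg (mul_nonneg (norm_nonneg _) h0)]
      calc ‖X n t‖ * φbar t ≤ (3 * |l| * t) * φbar t :=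
            mul_le_mul_of_nonneg_right (hXbound n t ht') h0
        _ = 3 * |l| * (t * φbar t) := by ring
    · -- h_lim
      rw [ae_restrict_iff' measurableSet_Ioi]
      refine Filter.Eventually.of_forall fun t ht => ?_
      have ht' : (0:ℝ) < t := Set.mem_Ioi.mp ht
      have hlower : ∀ n : ℕ, 0 ≤ ‖X n t‖ * φbar t :=
        fun n => mul_nonneg (norm_nonneg (X n t)) (hφbar_nonneg t ht'.le)
      have hgtend : Tendsto (fun n : ℕ => (l ^ 2 * t ^ 2 * φbar t) * (n:ℝ)⁻¹) atTop (nhds 0) := by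
        simpa using tendsto_inv_atTop_nhds_zero_nat.const_mul (l ^ 2 * t ^ 2 * φbar t)
      have hupper : ∀ᶠ n : ℕ in atTop,
          ‖X n t‖ * φbar t ≤ (l ^ 2 * t ^ 2 * φbar t) * (n:ℝ)⁻¹ := by
        filter_upwards [Filter.eventually_ge_atTop (max 1 ⌈|l| * t⌉₊)] with n hn
        have hn1 : 1 ≤ n := le_trans (le_max_left _ _) hn
        have hn0 : (0:ℝ) < n := by exact_mod_cast hn1
        have hnt : |l| * t ≤ n := le_trans (Nat.le_ceil _)
          (by exact_mod_cast le_trans (le_max_right _ _) hn)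
        have hx : |(l / (n:ℝ)) * t| ≤ 1 := by
          rw [abs_mul, abs_div, _root_.abs_of_nonneg ht'.le, _root_.abs_of_nonneg hn0.le,
            div_mul_eq_mul_div, div_le_one hn0]
          exact hnt
        have hfact : X n t = (n:ℂ) * (1 - Complex.exp (Complex.I * ((l / (n:ℝ)) * t : ℝ))
            + Complex.I * ((l / (n:ℝ)) * t : ℝ)) := by
          have h2 : (Complex.I * ((l / (n:ℝ) : ℝ) : ℂ) * t : ℂ)
              = Complex.I * ((l / (n:ℝ)) * t : ℝ) := by push_cast; ring
          have h3 : (n:ℂ) * (Complex.I * ((l / (n:ℝ)) * t : ℝ)) = Complex.I * l * t := by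
            have hnne : ((n:ℕ):ℂ) ≠ 0 := Nat.cast_ne_zero.mpr (by omega)
            push_cast
            field_simp
          simp only [hX]
          rw [h2, mul_add, h3]
        have hXle : ‖X n t‖ ≤ l ^ 2 * t ^ 2 * (n:ℝ)⁻¹ := by
          rw [hfact, norm_mul, Complex.norm_natCast]
          calc (n:ℝ) * ‖1 - Complex.exp (Complex.I * ((l / (n:ℝ)) * t : ℝ))
              + Complex.I * ((l / (n:ℝ)) * t : ℝ)‖
              ≤ (n:ℝ) * ((l / (n:ℝ)) * t) ^ 2 :=
                mul_le_mul_of_nonneg_left (norm_one_sub_exp_add_le hx) hn0.le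
            _ = l ^ 2 * t ^ 2 * (n:ℝ)⁻¹ := by
                field_simp
        calc ‖X n t‖ * φbar t ≤ (l ^ 2 * t ^ 2 * (n:ℝ)⁻¹) * φbar t :=
              mul_le_mul_of_nonneg_right hXle (hφbar_nonneg t ht'.le)
          _ = (l ^ 2 * t ^ 2 * φbar t) * (n:ℝ)⁻¹ := by ring
      exact squeeze_zero' (Filter.Eventually.of_forall hlower) hupper hgtend
  rw [tendsto_zero_iff_norm_tendsto_zero]
  refine squeeze_zero' (Filter.Eventually.of_forall fun n => norm_nonneg _)
    (Filter.Eventually.of_forall fun n => ?_) hD0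
  refine le_trans (norm_integral_le_integral_norm _) ?_
  refine setIntegral_mono_on ((hXint n).norm) (hFint n) measurableSet_Ioi fun t ht => ?_
  have ht' : (0:ℝ) ≤ t := (Set.mem_Ioi.mp ht).le
  rw [norm_mul, Complex.norm_real, Real.norm_eq_abs, _root_.abs_of_nonneg (hφpos n t ht')]
  exact mul_le_mul_of_nonneg_left (hdom n t ht') (norm_nonneg _)

end Alim

section AlimMain

open Complex

lemma Alim (φ : ℕ → ℝ → ℝ) (φbar : ℝ → ℝ) (b σ l : ℝ)
    (hφmeas : ∀ n, Measurable (φ n))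
    (hφpos : ∀ n t, 0 ≤ t → 0 ≤ φ n t)
    (hφbar_meas : Measurable φbar)
    (hφbar_nonneg : ∀ t : ℝ, 0 ≤ t → 0 ≤ φbar t)
    (hdom : ∀ n t, 0 ≤ t → φ n t ≤ φbar t)
    (htφbar_int : IntegrableOn (fun t => t * φbar t) (Set.Ioi (0:ℝ)))
    (hφint : ∀ n, IntegrableOn (φ n) (Set.Ioi (0:ℝ)))
    (hblim : Tendsto (fun n : ℕ => (n : ℝ) * (1 - L1norm (φ n))) atTop (nhds b))
    (hσlim : Tendsto (fun n : ℕ => ∫ t in Set.Ioi (0:ℝ), t * φ n t) atTop (nhds σ)) :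
    Tendsto (fun n : ℕ => (n:ℂ) *
        (1 - ∫ t in Set.Ioi (0:ℝ),
          Complex.exp (Complex.I * ((l / (n:ℝ) : ℝ) : ℂ) * t) * (φ n t : ℂ)))
      atTop (nhds ((b:ℂ) - Complex.I * l * σ)) := by
  have herr := err_tendsto_zero φ φbar l hφmeas hφpos hφbar_meas hφbar_nonneg hdom
    htφbar_int hφint
  have hL1eq : ∀ n, L1norm (φ n) = ∫ t in Set.Ioi (0:ℝ), φ n t := fun n =>
    setIntegral_congr_fun measurableSet_Ioi fun t ht =>
      abs_of_nonneg (hφpos n t (le_of_lt (Set.mem_Ioi.mp ht)))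
  have hId : ∀ n : ℕ, (n:ℂ) *
      (1 - ∫ t in Set.Ioi (0:ℝ),
        Complex.exp (Complex.I * ((l / (n:ℝ) : ℝ) : ℂ) * t) * (φ n t : ℂ))
      = (((n:ℝ) * (1 - L1norm (φ n)) : ℝ) : ℂ)
        + ((∫ t in Set.Ioi (0:ℝ),
            ((n:ℂ) * (1 - Complex.exp (Complex.I * ((l / (n:ℝ) : ℝ) : ℂ) * t))
              + Complex.I * l * t) * (φ n t : ℂ))
          - Complex.I * l * ((∫ t in Set.Ioi (0:ℝ), t * φ n t : ℝ) : ℂ)) := by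
    intro n
    set e : ℝ → ℂ := fun t => Complex.exp (Complex.I * ((l / (n:ℝ) : ℝ) : ℂ) * t) with he
    have hIφC : IntegrableOn (fun t => ((φ n t : ℝ) : ℂ)) (Set.Ioi (0:ℝ)) :=
      (hφint n).ofReal
    have hIeφ : IntegrableOn (fun t => e t * (φ n t : ℂ)) (Set.Ioi (0:ℝ)) :=
      integrableOn_e_mul _ (hφmeas n) (hφint n)
    have hItφ : IntegrableOn (fun t : ℝ => (Complex.I * l * (t:ℂ)) * (φ n t : ℂ))
        (Set.Ioi (0:ℝ)) := by
      refine Integrable.mono' (htφbar_int.const_mul |l|) ?_ ?_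
      · exact ((continuous_const.mul Complex.continuous_ofReal).aestronglyMeasurable.mul
          (Complex.measurable_ofReal.comp (hφmeas n)).aestronglyMeasurable)
      · rw [ae_restrict_iff' measurableSet_Ioi]
        refine Filter.Eventually.of_forall fun t ht => ?_
        have ht' : (0:ℝ) ≤ t := (Set.mem_Ioi.mp ht).le
        rw [norm_mul, Complex.norm_real, Real.norm_eq_abs,
          _root_.abs_of_nonneg (hφpos n t ht'), norm_Ilt l t ht']
        calc |l| * t * φ n t ≤ |l| * t * φbar t := by
              apply mul_le_mul_of_nonneg_left (hdom n t ht')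
              positivity
          _ = |l| * (t * φbar t) := by ring
    have hIn1e : IntegrableOn (fun t => ((n:ℂ) * (1 - e t)) * (φ n t : ℂ))
        (Set.Ioi (0:ℝ)) := by
      refine Integrable.mono' (htφbar_int.const_mul (2 * |l|)) ?_ ?_
      · exact ((continuous_const.mul (continuous_const.sub
          (aux_cont_e (l / (n:ℝ))))).aestronglyMeasurable.mul
          (Complex.measurable_ofReal.comp (hφmeas n)).aestronglyMeasurable)
      · rw [ae_restrict_iff' measurableSet_Ioi]
        refine Filter.Eventually.of_forall fun t ht => ?_
        have ht' : (0:ℝ) ≤ t := (Set.mem_Ioi.mp ht).le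
        rw [norm_mul, Complex.norm_real, Real.norm_eq_abs,
          _root_.abs_of_nonneg (hφpos n t ht')]
        calc ‖(n:ℂ) * (1 - e t)‖ * φ n t ≤ (2 * |l| * t) * φbar t := by
              apply mul_le_mul (key_norm_bound n l t ht') (hdom n t ht') (hφpos n t ht')
              positivity
          _ = 2 * |l| * (t * φbar t) := by ring
    have eqA : (∫ t in Set.Ioi (0:ℝ), ((n:ℂ) * (1 - e t) + Complex.I * l * t) * (φ n t : ℂ))
        = (∫ t in Set.Ioi (0:ℝ), ((n:ℂ) * (1 - e t)) * (φ n t : ℂ))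
          + ∫ t in Set.Ioi (0:ℝ), (Complex.I * l * (t:ℂ)) * (φ n t : ℂ) := by
      rw [← integral_add hIn1e hItφ]
      refine integral_congr_ae (Filter.Eventually.of_forall fun t => ?_)
      ring
    have eqB : (∫ t in Set.Ioi (0:ℝ), ((n:ℂ) * (1 - e t)) * (φ n t : ℂ))
        = (n:ℂ) * ∫ t in Set.Ioi (0:ℝ), (1 - e t) * (φ n t : ℂ) := by
      rw [← integral_const_mul]
      refine integral_congr_ae (Filter.Eventually.of_forall fun t => ?_)
      ring
    have eqC : (∫ t in Set.Ioi (0:ℝ), (1 - e t) * (φ n t : ℂ))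
        = ((∫ t in Set.Ioi (0:ℝ), φ n t : ℝ) : ℂ)
          - ∫ t in Set.Ioi (0:ℝ), e t * (φ n t : ℂ) := by
      have hof : ((∫ t in Set.Ioi (0:ℝ), φ n t : ℝ) : ℂ)
          = ∫ t in Set.Ioi (0:ℝ), ((φ n t : ℝ) : ℂ) := (integral_ofReal (𝕜 := ℂ)).symm
      rw [hof, ← integral_sub hIφC hIeφ]
      refine integral_congr_ae (Filter.Eventually.of_forall fun t => ?_)
      ring
    have eqD : (∫ t in Set.Ioi (0:ℝ), (Complex.I * l * (t:ℂ)) * (φ n t : ℂ))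
        = Complex.I * l * ((∫ t in Set.Ioi (0:ℝ), t * φ n t : ℝ) : ℂ) := by
      have hof2 : ((∫ t in Set.Ioi (0:ℝ), t * φ n t : ℝ) : ℂ)
          = ∫ t in Set.Ioi (0:ℝ), ((t * φ n t : ℝ) : ℂ) := (integral_ofReal (𝕜 := ℂ)).symm
      rw [hof2, ← integral_const_mul]
      refine integral_congr_ae (Filter.Eventually.of_forall fun t => ?_)
      push_cast
      ring
    rw [eqA, eqB, eqC, eqD, hL1eq n, Complex.ofReal_mul, Complex.ofReal_sub,
      Complex.ofReal_one, Complex.ofReal_natCast]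
    ring
  have h1 : Tendsto (fun n : ℕ => (((n:ℝ) * (1 - L1norm (φ n)) : ℝ) : ℂ)) atTop
      (nhds (b:ℂ)) := (Complex.continuous_ofReal.tendsto b).comp hblim
  have h2 : Tendsto (fun n : ℕ =>
      Complex.I * l * ((∫ t in Set.Ioi (0:ℝ), t * φ n t : ℝ) : ℂ)) atTop
      (nhds (Complex.I * l * σ)) :=
    ((Complex.continuous_ofReal.tendsto σ).comp hσlim).const_mul (Complex.I * l)
  have hfinal := h1.add (herr.sub h2)
  rw [show (b:ℂ) + ((0:ℂ) - Complex.I * l * σ) = (b:ℂ) - Complex.I * l * σ from by ring]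
    at hfinal
  exact Tendsto.congr (fun n => (hId n).symm) hfinal

end AlimMain

section Part2

open Complex

lemma exp_fourier (b σ l : ℝ) (hb : 0 < b) (hσ : 0 < σ) :
    1 / ((b : ℂ) - Complex.I * (σ : ℂ) * (l : ℂ))
      = ∫ t in Set.Ioi (0:ℝ),
          Complex.exp (Complex.I * l * t) * ((σ⁻¹ * Real.exp (-(b / σ) * t) : ℝ) : ℂ) := by
  set z : ℂ := Complex.I * l - ((b / σ : ℝ) : ℂ) with hz
  have hzre : z.re < 0 := by
    have h1 : z.re = -(b / σ) := by
      simp [hz, Complex.sub_re, Complex.mul_re]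
    rw [h1]
    have := div_pos hb hσ
    linarith
  have hint : ∀ t : ℝ, Complex.exp (Complex.I * l * t)
        * ((σ⁻¹ * Real.exp (-(b / σ) * t) : ℝ) : ℂ)
      = ((σ⁻¹ : ℝ) : ℂ) * Complex.exp (z * t) := by
    intro t
    rw [show z * t = Complex.I * l * t + ((-(b / σ) * t : ℝ) : ℂ) from by
      rw [hz]; push_cast; ring, Complex.exp_add]
    push_cast [Complex.ofReal_exp]
    ring
  rw [integral_congr_ae (Filter.Eventually.of_forall fun t => hint t),
    integral_const_mul, integral_cexp_Ioi hzre]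
  have hσ0 : ((σ:ℝ):ℂ) ≠ 0 := Complex.ofReal_ne_zero.mpr hσ.ne'
  have hzσ : z * σ = -((b:ℂ) - Complex.I * σ * l) := by
    rw [hz]
    push_cast
    field_simp
    ring
  rw [Complex.ofReal_inv,
    show ((σ:ℝ):ℂ)⁻¹ * -z⁻¹ = -(z * ((σ:ℝ):ℂ))⁻¹ from by rw [mul_inv]; ring, hzσ]
  rw [one_div, inv_neg, neg_neg]

end Part2


/-- under (i)–(iv), for every `λ`,
`∫₀^∞ e^{iλt} R_n(nt) dt → 1/(b − iσλ)`, which equals the Fourier transform of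
`t ↦ σ⁻¹ e^{−(b/σ)t}`. -/
theorem stmt7 (φ : ℕ → ℝ → ℝ) (φbar : ℝ → ℝ) (R : ℕ → ℝ → ℝ) (b σ : ℝ)
    -- (i)
    (hφmeas : ∀ n, Measurable (φ n))
    (hφpos : ∀ n t, 0 ≤ t → 0 ≤ φ n t)
    (hφbar_meas : Measurable φbar)
    (hφbar_int : IntegrableOn (fun t => (1 + t) * φbar t) (Set.Ioi 0))
    (hdom : ∀ n t, 0 ≤ t → φ n t ≤ φbar t)
    -- (ii)
    (hTV : ∃ C : NNReal, ∀ n, eVariationOn (φ n) (Set.Ici 0) ≤ C)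
    -- (iii)
    (hL1lt : ∀ n, L1norm (φ n) < 1)
    (hb : 0 < b)
    (hblim : Tendsto (fun n : ℕ => (n : ℝ) * (1 - L1norm (φ n))) atTop (nhds b))
    -- (iv)
    (hσ : 0 < σ)
    (hσlim : Tendsto (fun n : ℕ => ∫ t in Set.Ioi (0:ℝ), t * φ n t) atTop (nhds σ))
    -- resolvents
    (hRmeas : ∀ n, Measurable (R n))
    (hRpos : ∀ n t, 0 ≤ t → 0 ≤ R n t)
    (hRint : ∀ n, IntegrableOn (R n) (Set.Ioi 0))
    (hres : ∀ n, ∀ᵐ t ∂(volume.restrict (Set.Ioi 0)),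
      R n t = φ n t + conv (R n) (φ n) t) :
    ∀ l : ℝ,
      Tendsto
        (fun n : ℕ =>
          ∫ t in Set.Ioi (0:ℝ), Complex.exp (Complex.I * l * t) * (R n ((n:ℝ) * t) : ℂ))
        atTop (nhds (1 / ((b : ℂ) - Complex.I * (σ : ℂ) * (l : ℂ)))) ∧
      1 / ((b : ℂ) - Complex.I * (σ : ℂ) * (l : ℂ))
        = ∫ t in Set.Ioi (0:ℝ),
            Complex.exp (Complex.I * l * t) * ((σ⁻¹ * Real.exp (-(b / σ) * t) : ℝ) : ℂ) := by
  intro l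
  -- derived integrability facts
  have hφbar_nonneg : ∀ t : ℝ, 0 ≤ t → 0 ≤ φbar t :=
    fun t ht => le_trans (hφpos 0 t ht) (hdom 0 t ht)
  have hφbar_int' : IntegrableOn φbar (Set.Ioi (0:ℝ)) := by
    refine Integrable.mono' hφbar_int hφbar_meas.aestronglyMeasurable ?_
    rw [ae_restrict_iff' measurableSet_Ioi]
    refine Filter.Eventually.of_forall fun t ht => ?_
    have ht' : (0:ℝ) < t := Set.mem_Ioi.mp ht
    have h0 := hφbar_nonneg t ht'.le
    rw [Real.norm_eq_abs, _root_.abs_of_nonneg h0]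
    nlinarith
  have htφbar_int : IntegrableOn (fun t => t * φbar t) (Set.Ioi (0:ℝ)) := by
    refine Integrable.mono' hφbar_int (measurable_id.mul hφbar_meas).aestronglyMeasurable ?_
    rw [ae_restrict_iff' measurableSet_Ioi]
    refine Filter.Eventually.of_forall fun t ht => ?_
    have ht' : (0:ℝ) < t := Set.mem_Ioi.mp ht
    have h0 := hφbar_nonneg t ht'.le
    rw [Real.norm_eq_abs, _root_.abs_of_nonneg (by positivity)]
    nlinarith
  have hφint : ∀ n, IntegrableOn (φ n) (Set.Ioi (0:ℝ)) := by
    intro n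
    refine Integrable.mono' hφbar_int' (hφmeas n).aestronglyMeasurable ?_
    rw [ae_restrict_iff' measurableSet_Ioi]
    refine Filter.Eventually.of_forall fun t ht => ?_
    have ht' : (0:ℝ) < t := Set.mem_Ioi.mp ht
    rw [Real.norm_eq_abs, _root_.abs_of_nonneg (hφpos n t ht'.le)]
    exact hdom n t ht'.le
  -- hat transforms
  set hatφ : ℕ → ℝ → ℂ := fun n lam =>
    ∫ t in Set.Ioi (0:ℝ), Complex.exp (Complex.I * lam * t) * (φ n t : ℂ) with hhatφ
  set hatR : ℕ → ℝ → ℂ := fun n lam =>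
    ∫ t in Set.Ioi (0:ℝ), Complex.exp (Complex.I * lam * t) * (R n t : ℂ) with hhatR
  have hφhat_lt : ∀ n lam, ‖hatφ n lam‖ < 1 :=
    fun n lam => lt_of_le_of_lt (norm_hat_le lam (φ n)) (hL1lt n)
  have hne : ∀ n lam, 1 - hatφ n lam ≠ 0 := by
    intro n lam h
    have h1 : (1:ℂ) = hatφ n lam := sub_eq_zero.mp h
    have h2 := hφhat_lt n lam
    rw [← h1] at h2
    norm_num at h2
  have hhatReq : ∀ n lam, hatR n lam = hatφ n lam / (1 - hatφ n lam) := by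
    intro n lam
    have hc := hat_conv lam (hRmeas n) (hφmeas n) (hRint n) (hφint n)
    have hae : ∀ᵐ t : ℝ ∂(volume.restrict (Set.Ioi (0:ℝ))),
        Complex.exp (Complex.I * lam * t) * (R n t : ℂ)
          = Complex.exp (Complex.I * lam * t) * ((φ n t : ℝ) : ℂ)
            + Complex.exp (Complex.I * lam * t) * ((conv (R n) (φ n) t : ℝ) : ℂ) := by
      filter_upwards [hres n] with t ht
      rw [ht]
      push_cast
      ring
    have heq : hatR n lam = hatφ n lam + hatR n lam * hatφ n lam := by
      rw [hhatR]
      calc (∫ t in Set.Ioi (0:ℝ), Complex.exp (Complex.I * lam * t) * (R n t : ℂ))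
          = ∫ t in Set.Ioi (0:ℝ),
              (Complex.exp (Complex.I * lam * t) * ((φ n t : ℝ) : ℂ)
                + Complex.exp (Complex.I * lam * t) * ((conv (R n) (φ n) t : ℝ) : ℂ)) :=
            integral_congr_ae hae
        _ = (∫ t in Set.Ioi (0:ℝ), Complex.exp (Complex.I * lam * t) * ((φ n t : ℝ) : ℂ))
            + ∫ t in Set.Ioi (0:ℝ),
                Complex.exp (Complex.I * lam * t) * ((conv (R n) (φ n) t : ℝ) : ℂ) :=
            integral_add (integrableOn_e_mul lam (hφmeas n) (hφint n)) hc.1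
        _ = hatφ n lam + hatR n lam * hatφ n lam := by rw [hc.2]
    rw [eq_div_iff (hne n lam)]
    linear_combination heq
  -- scaling identity
  have hscale : ∀ n : ℕ, 1 ≤ n →
      (∫ t in Set.Ioi (0:ℝ), Complex.exp (Complex.I * l * t) * (R n ((n:ℝ) * t) : ℂ))
        = ((n:ℝ)⁻¹ : ℝ) • hatR n (l / (n:ℝ)) := by
    intro n hn
    have hn0 : (0:ℝ) < n := by exact_mod_cast hn
    have h1 := MeasureTheory.integral_comp_mul_left_Ioi
      (fun x => Complex.exp (Complex.I * ((l / (n:ℝ) : ℝ) : ℂ) * x) * (R n x : ℂ)) 0 hn0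
    rw [mul_zero] at h1
    rw [← h1]
    refine setIntegral_congr_fun measurableSet_Ioi fun t ht => ?_
    have h2 : Complex.I * l * t = Complex.I * ((l / (n:ℝ) : ℝ) : ℂ) * (((n:ℝ) * t : ℝ) : ℂ) := by
      have hnne : ((n:ℕ):ℂ) ≠ 0 := Nat.cast_ne_zero.mpr (by omega)
      push_cast
      field_simp
    rw [h2]
  -- the A sequence and its limit
  set A : ℕ → ℂ := fun n => (n:ℂ) * (1 - hatφ n (l / (n:ℝ))) with hA
  have hAlim : Tendsto A atTop (nhds ((b:ℂ) - Complex.I * l * σ)) := by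
    have := Alim φ φbar b σ l hφmeas hφpos hφbar_meas hφbar_nonneg hdom htφbar_int hφint
      hblim hσlim
    exact this
  have hAne : ∀ n : ℕ, 1 ≤ n → A n ≠ 0 := by
    intro n hn
    have hnne : ((n:ℕ):ℂ) ≠ 0 := Nat.cast_ne_zero.mpr (by omega)
    exact mul_ne_zero hnne (hne n (l / (n:ℝ)))
  have hcne : ((b:ℂ) - Complex.I * l * σ) ≠ 0 := by
    intro h
    have h1 := congrArg Complex.re h
    simp [Complex.sub_re, Complex.mul_re] at h1
    linarith
  -- a_n → 1
  have halim : Tendsto (fun n : ℕ => hatφ n (l / (n:ℝ))) atTop (nhds 1) := by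
    have hinv : Tendsto (fun n : ℕ => ((n:ℂ))⁻¹) atTop (nhds 0) := by
      have h0 : Tendsto (fun n : ℕ => (((n:ℝ)⁻¹ : ℝ) : ℂ)) atTop (nhds ((0:ℝ):ℂ)) :=
        (Complex.continuous_ofReal.tendsto 0).comp tendsto_inv_atTop_nhds_zero_nat
      simpa [Complex.ofReal_inv] using h0
    have hmul := hAlim.mul hinv
    rw [mul_zero] at hmul
    have hev : ∀ᶠ n : ℕ in atTop, 1 - A n * ((n:ℂ))⁻¹ = hatφ n (l / (n:ℝ)) := by
      filter_upwards [Filter.eventually_ge_atTop 1] with n hn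
      have hnne : ((n:ℕ):ℂ) ≠ 0 := Nat.cast_ne_zero.mpr (by omega)
      rw [hA]
      field_simp
      ring
    have := (tendsto_const_nhds (x := (1:ℂ)) (f := atTop)).sub hmul
    rw [sub_zero] at this
    exact Tendsto.congr' hev this
  constructor
  · -- main convergence
    have hdiv : Tendsto (fun n : ℕ => hatφ n (l / (n:ℝ)) / A n) atTop
        (nhds (1 / ((b:ℂ) - Complex.I * l * σ))) := halim.div hAlim hcne
    have hev : ∀ᶠ n : ℕ in atTop,
        hatφ n (l / (n:ℝ)) / A n
          = ∫ t in Set.Ioi (0:ℝ), Complex.exp (Complex.I * l * t) * (R n ((n:ℝ) * t) : ℂ) := by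
      filter_upwards [Filter.eventually_ge_atTop 1] with n hn
      rw [hscale n hn, hhatReq n (l / (n:ℝ)), Complex.real_smul, hA]
      have hnne : ((n:ℕ):ℂ) ≠ 0 := Nat.cast_ne_zero.mpr (by omega)
      rw [Complex.ofReal_inv, Complex.ofReal_natCast]
      have hd := hne n (l / (n:ℝ))
      field_simp
    have hfin := Tendsto.congr' hev hdiv
    rw [show (1 / ((b:ℂ) - Complex.I * (σ:ℂ) * (l:ℂ))) = 1 / ((b:ℂ) - Complex.I * l * σ)
      from by ring_nf]
    exact hfin
  · exact exp_fourier b σ l hb hσ
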